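/- arXiv:2404.01069 — 2 statements merged into one kernel-verified Lean document; each statement's English description precedes it below -/
import Mathlib

section
/- Let p_1, ..., p_τ be the first τ primes and for w ∈ ℤ[√p_1, ..., √p_τ] write w = Σ_{f ∈ P_τ} c_f(w) √f with integer coefficients (unique by linear independence), and set M(w) = max_{f ∈ P_τ} |c_f(w)|. Then for any w_1, w_2 ∈ ℤ[√p_1, ..., √p_τ], M(w_1 w_2) ≤ M(w_1) M(w_2) ∏_{j=1}^{τ} (p_j + 1). -/
/-! The square roots `√f`, `f ∈ P_τ`, are linearly independent over `ℤ`: inductively, `√r` for a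
squarefree `r > 1` prime to `p_1, …, p_n` does not lie in `ℚ(√p_1, …, √p_n)`, because an element
`a + b √p_n` of `ℚ(√p_1, …, √p_{n-1})(√p_n)` whose square lies in the smaller field has `a = 0` or
`b = 0`. The coordinates of `w₁ w₂` then come from `√f_s √f_{s'} = f_{s ∩ s'} √f_{s Δ s'}`, and the
bound `f_{s ∩ s'} ≤ f_s` gives `M(w₁ w₂) ≤ M(w₁) M(w₂) ∑_{f ∈ P_τ} f = M(w₁) M(w₂) ∏_j (p_j + 1)`. -/

/-- The `i`-th prime (0-indexed: `nthPrime 0 = 2`). -/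
noncomputable def nthPrime (i : ℕ) : ℕ := Nat.nth Nat.Prime i

/-- The squarefree divisor of `p_1 ⋯ p_τ` indexed by `s ∈ {0,1}^τ`. -/
noncomputable def sqfDiv (τ : ℕ) (s : Fin τ → Bool) : ℕ :=
  ∏ j, if s j then nthPrime j else 1

/-- `M(w)`: the maximum absolute value of the coordinates of `w` in the basis `{√f : f ∈ P_τ}`. -/
def Mcoef {τ : ℕ} (c : (Fin τ → Bool) → ℤ) : ℕ :=
  Finset.univ.sup fun s => (c s).natAbs

open Real Finset
open scoped symmDiff

namespace Subfield

variable {L : Type*} [Field L] (K : Subfield L) {x : L}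

/-- `K + K x`, closed under inversion because `(a + b x)(a - b x) = a ^ 2 - b ^ 2 x ^ 2 ∈ K`. -/
def adjoinSqrt (hx : x ^ 2 ∈ K) : Subfield L where
  carrier := {y | ∃ a ∈ K, ∃ b ∈ K, y = a + b * x}
  zero_mem' := ⟨0, zero_mem K, 0, zero_mem K, by ring⟩
  one_mem' := ⟨1, one_mem K, 0, zero_mem K, by ring⟩
  add_mem' := by
    rintro _ _ ⟨a, ha, b, hb, rfl⟩ ⟨c, hc, d, hd, rfl⟩
    exact ⟨a + c, add_mem ha hc, b + d, add_mem hb hd, by ring⟩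
  neg_mem' := by
    rintro _ ⟨a, ha, b, hb, rfl⟩
    exact ⟨-a, neg_mem ha, -b, neg_mem hb, by ring⟩
  mul_mem' := by
    rintro _ _ ⟨a, ha, b, hb, rfl⟩ ⟨c, hc, d, hd, rfl⟩
    exact ⟨a * c + b * d * x ^ 2, add_mem (mul_mem ha hc) (mul_mem (mul_mem hb hd) hx),
      a * d + b * c, add_mem (mul_mem ha hd) (mul_mem hb hc), by ring⟩
  inv_mem' := by
    rintro _ ⟨a, ha, b, hb, rfl⟩
    set N := a ^ 2 - b ^ 2 * x ^ 2
    have hN : N ∈ K := sub_mem (pow_mem ha 2) (mul_mem (pow_mem hb 2) hx)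
    by_cases hN0 : N = 0
    · rcases mul_eq_zero.mp (show (a + b * x) * (a - b * x) = 0 by rw [← hN0]; ring) with h | h
      · exact ⟨0, zero_mem K, 0, zero_mem K, by simp [h]⟩
      · refine ⟨(a + a)⁻¹, inv_mem (add_mem ha ha), 0, zero_mem K, ?_⟩
        rw [sub_eq_zero] at h
        rw [← h]; ring
    · refine ⟨a / N, div_mem ha hN, -b / N, div_mem (neg_mem hb) hN, ?_⟩
      refine inv_eq_of_mul_eq_one_right ?_
      rw [show (a + b * x) * (a / N + -b / N * x) = N / N by ring, div_self hN0]

theorem closure_insert_le_adjoinSqrt {s : Set L} (hx : x ^ 2 ∈ closure s) :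
    closure (insert x s) ≤ (closure s).adjoinSqrt hx := by
  rw [closure_le, Set.insert_subset_iff]
  refine ⟨⟨0, zero_mem _, 1, one_mem _, by ring⟩, fun y hy => ?_⟩
  exact ⟨y, subset_closure hy, 0, zero_mem _, by ring⟩

theorem mem_or_mul_mem_of_sq_mem [NeZero (2 : L)] {hx : x ^ 2 ∈ K} (hxK : x ∉ K) {y : L}
    (hy : y ∈ K.adjoinSqrt hx) (hy2 : y ^ 2 ∈ K) : y ∈ K ∨ y * x ∈ K := by
  obtain ⟨a, ha, b, hb, rfl⟩ := hy
  by_cases hb0 : b = 0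
  · left; simpa [hb0] using ha
  by_cases ha0 : a = 0
  · right
    rw [ha0, zero_add, mul_assoc, ← sq]
    exact mul_mem hb hx
  refine absurd ?_ hxK
  have h2ab : 2 * a * b ≠ 0 := mul_ne_zero (mul_ne_zero two_ne_zero ha0) hb0
  rw [show x = ((a + b * x) ^ 2 - a ^ 2 - b ^ 2 * x ^ 2) / (2 * a * b) by field_simp; ring]
  exact div_mem (sub_mem (sub_mem hy2 (pow_mem ha 2)) (mul_mem (pow_mem hb 2) hx))
    (mul_mem (mul_mem (ofNat_mem K 2) ha) hb)

end Subfield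

noncomputable def sqrtField (P : Finset ℕ) : Subfield ℝ :=
  Subfield.closure ((fun p : ℕ => √(p : ℝ)) '' P)

theorem Squarefree.not_isSquare {r : ℕ} (hr : Squarefree r) (hr1 : r ≠ 1) : ¬IsSquare r := by
  rintro ⟨k, rfl⟩
  rw [Nat.isUnit_iff.mp (hr k dvd_rfl)] at hr1
  exact hr1 rfl

theorem sqrt_notMem_sqrtField (P : Finset ℕ) (hP : ∀ p ∈ P, p.Prime) {r : ℕ}
    (hr : Squarefree r) (hr1 : 1 < r) (hrP : ∀ p ∈ P, ¬p ∣ r) : √(r : ℝ) ∉ sqrtField P := by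
  induction P using Finset.induction_on generalizing r with
  | empty =>
    intro hmem
    have hrat : sqrtField ∅ ≤ (Rat.castHom ℝ).fieldRange := by
      rw [sqrtField, Finset.coe_empty, Set.image_empty, Subfield.closure_empty]
      exact bot_le
    obtain ⟨q, hq⟩ := RingHom.mem_fieldRange.mp (hrat hmem)
    exact irrational_sqrt_natCast_iff.mpr (hr.not_isSquare hr1.ne') ⟨q, hq⟩
  | insert q P hqP IH =>
    have hq : q.Prime := hP q (Finset.mem_insert_self q P)
    have hP' : ∀ p ∈ P, p.Prime := fun p hp => hP p (Finset.mem_insert_of_mem hp)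
    have hpq : ∀ p ∈ P, ¬p ∣ q := fun p hp hdvd =>
      hqP (((Nat.prime_dvd_prime_iff_eq (hP' p hp) hq).mp hdvd) ▸ hp)
    have hqr : ¬q ∣ r := hrP q (Finset.mem_insert_self q P)
    have hsqrt_q : √(q : ℝ) ∉ sqrtField P := IH hP' hq.squarefree hq.one_lt hpq
    have hq2 : √(q : ℝ) ^ 2 ∈ sqrtField P := by
      rw [sq_sqrt (Nat.cast_nonneg q)]; exact natCast_mem _ q
    have hle : sqrtField (insert q P) ≤ (sqrtField P).adjoinSqrt hq2 := by
      rw [sqrtField, Finset.coe_insert, Set.image_insert_eq]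
      exact Subfield.closure_insert_le_adjoinSqrt hq2
    intro hmem
    have hr2 : √(r : ℝ) ^ 2 ∈ sqrtField P := by
      rw [sq_sqrt (Nat.cast_nonneg r)]; exact natCast_mem _ r
    rcases (sqrtField P).mem_or_mul_mem_of_sq_mem hsqrt_q (hle hmem) hr2 with h | h
    · exact IH hP' hr hr1 (fun p hp => hrP p (Finset.mem_insert_of_mem hp)) h
    · have hcop : r.Coprime q := ((Nat.Prime.coprime_iff_not_dvd hq).mpr hqr).symm
      refine IH hP' ((Nat.squarefree_mul hcop).mpr ⟨hr, hq.squarefree⟩)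
        (by nlinarith [hq.one_lt]) (fun p hp hdvd => ?_) ?_
      · rcases (Nat.Prime.dvd_mul (hP' p hp)).mp hdvd with h | h
        · exact hrP p (Finset.mem_insert_of_mem hp) h
        · exact hpq p hp h
      · rwa [Nat.cast_mul, sqrt_mul (Nat.cast_nonneg r)]

theorem nthPrime_prime (i : ℕ) : (nthPrime i).Prime := Nat.prime_nth_prime i

theorem nthPrime_injective : Function.Injective nthPrime :=
  Nat.nth_injective Nat.infinite_setOfPred_prime

theorem sqfDiv_snoc {n : ℕ} (t : Fin n → Bool) (b : Bool) :
    sqfDiv (n + 1) (Fin.snoc t b) = sqfDiv n t * if b then nthPrime n else 1 := by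
  simp [sqfDiv, Fin.prod_univ_castSucc]

theorem sqrt_sqfDiv {τ : ℕ} (s : Fin τ → Bool) :
    √(sqfDiv τ s : ℝ) = ∏ j, if s j then √(nthPrime j : ℝ) else 1 := by
  rw [sqfDiv, Nat.cast_prod, sqrt_prod _ fun j _ => Nat.cast_nonneg _]
  exact prod_congr rfl fun j _ => by split_ifs <;> simp

theorem sqrt_sqfDiv_mem {n : ℕ} (s : Fin n → Bool) :
    √(sqfDiv n s : ℝ) ∈ sqrtField ((range n).image nthPrime) := by
  rw [sqrt_sqfDiv]
  refine prod_mem fun j _ => ?_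
  split_ifs
  · exact Subfield.subset_closure ⟨nthPrime j, by simpa using ⟨j, j.isLt, rfl⟩, rfl⟩
  · exact one_mem _

theorem sum_bool_tuple_succ {M : Type*} [AddCommMonoid M] {n : ℕ} (f : (Fin (n + 1) → Bool) → M) :
    ∑ s, f s = ∑ t, (f (Fin.snoc t false) + f (Fin.snoc t true)) := by
  rw [← ((Fin.snocEquiv fun _ => Bool).sum_comp f), Fintype.sum_prod_type, Fintype.sum_bool,
    add_comm, ← sum_add_distrib]
  rfl

theorem linearIndependent_sqrt_sqfDiv (n : ℕ) :
    LinearIndependent ℤ fun s : Fin n → Bool => √(sqfDiv n s : ℝ) := by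
  rw [Fintype.linearIndependent_iff]
  induction n with
  | zero =>
    intro g hg s
    rw [Fintype.sum_unique, sqfDiv, Fintype.prod_empty] at hg
    simp only [Nat.cast_one, sqrt_one, zsmul_eq_mul, mul_one, Int.cast_eq_zero] at hg
    exact (congrArg g (Subsingleton.elim s _)).trans hg
  | succ n IH =>
    intro g hg
    set A := ∑ t, g (Fin.snoc t false) • √(sqfDiv n t : ℝ)
    set B := ∑ t, g (Fin.snoc t true) • √(sqfDiv n t : ℝ)
    have hAB : A + B * √(nthPrime n : ℝ) = 0 := by
      rw [← hg, sum_bool_tuple_succ, sum_add_distrib, sum_mul]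
      simp [A, sqfDiv_snoc, sqrt_mul, mul_assoc]
    have hmem (b : Bool) : ∑ t, g (Fin.snoc t b) • √(sqfDiv n t : ℝ) ∈
        sqrtField ((range n).image nthPrime) :=
      sum_mem fun t _ => zsmul_mem (sqrt_sqfDiv_mem t) _
    have hpn : √(nthPrime n : ℝ) ∉ sqrtField ((range n).image nthPrime) := by
      refine sqrt_notMem_sqrtField _ (by simp [nthPrime_prime]) (nthPrime_prime n).squarefree
        (nthPrime_prime n).one_lt ?_
      simp only [mem_image, mem_range, forall_exists_index, and_imp, forall_apply_eq_imp_iff₂]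
      intro i hi hdvd
      exact hi.ne (nthPrime_injective
        ((Nat.prime_dvd_prime_iff_eq (nthPrime_prime i) (nthPrime_prime n)).mp hdvd))
    have hB : B = 0 := by
      by_contra hB
      refine hpn ?_
      rw [show √(nthPrime n : ℝ) = -A / B by field_simp; linarith]
      exact div_mem (neg_mem (hmem false)) (hmem true)
    have hA : A = 0 := by simpa [hB] using hAB
    intro s
    obtain ⟨⟨b, t⟩, rfl⟩ := (Fin.snocEquiv fun _ => Bool).surjective s
    cases b
    · exact IH _ hA t
    · exact IH _ hB t

section Multiplication

variable {τ : ℕ}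

/-- The element of `ℤ[√p_1, …, √p_τ]` with coordinates `c`. -/
noncomputable def sqrtComb (c : (Fin τ → Bool) → ℤ) : ℝ :=
  ∑ s, (c s : ℝ) * √(sqfDiv τ s)

theorem sqrtComb_injective : Function.Injective (sqrtComb (τ := τ)) := by
  intro c d hcd
  funext s
  refine sub_eq_zero.mp (Fintype.linearIndependent_iff.mp (linearIndependent_sqrt_sqfDiv τ)
    (c - d) ?_ s)
  simp only [Pi.sub_apply, sub_smul, sum_sub_distrib, zsmul_eq_mul]
  exact sub_eq_zero.mpr hcd

theorem sqrt_sqfDiv_mul_sqrt_sqfDiv (s s' : Fin τ → Bool) :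
    √(sqfDiv τ s : ℝ) * √(sqfDiv τ s') = sqfDiv τ (s ⊓ s') * √(sqfDiv τ (s ∆ s')) := by
  rw [sqrt_sqfDiv, sqrt_sqfDiv, sqrt_sqfDiv, sqfDiv, Nat.cast_prod, ← prod_mul_distrib,
    ← prod_mul_distrib]
  refine prod_congr rfl fun j _ => ?_
  cases hs : s j <;> cases hs' : s' j <;> simp [hs, hs']

/-- The coordinates of `sqrtComb c₁ * sqrtComb c₂`, read off from
`√f_s √f_{s Δ t} = f_{s ∩ (s Δ t)} √f_t`. -/
noncomputable def mulCoeff (c₁ c₂ : (Fin τ → Bool) → ℤ) (t : Fin τ → Bool) : ℤ :=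
  ∑ s, c₁ s * c₂ (s ∆ t) * sqfDiv τ (s ⊓ s ∆ t)

theorem sqrtComb_mul (c₁ c₂ : (Fin τ → Bool) → ℤ) :
    sqrtComb c₁ * sqrtComb c₂ = sqrtComb (mulCoeff c₁ c₂) := by
  have hrow (s : Fin τ → Bool) : ∑ s', (c₁ s : ℝ) * √(sqfDiv τ s) * (c₂ s' * √(sqfDiv τ s')) =
      ∑ t, (c₁ s * c₂ (s ∆ t) * sqfDiv τ (s ⊓ s ∆ t) : ℤ) * √(sqfDiv τ t) := by
    rw [← Equiv.sum_comp (symmDiff_right_involutive s).toPerm]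
    refine sum_congr rfl fun t _ => ?_
    have hprod := sqrt_sqfDiv_mul_sqrt_sqfDiv s (s ∆ t)
    rw [symmDiff_symmDiff_cancel_left] at hprod
    simp only [Function.Involutive.coe_toPerm]
    push_cast
    linear_combination (c₁ s * c₂ (s ∆ t) : ℝ) * hprod
  simp only [sqrtComb, sum_mul_sum, hrow, mulCoeff]
  rw [sum_comm]
  push_cast
  simp only [sum_mul]

theorem natAbs_le_Mcoef (c : (Fin τ → Bool) → ℤ) (s : Fin τ → Bool) :
    (c s).natAbs ≤ Mcoef c :=
  le_sup (f := fun s => (c s).natAbs) (mem_univ s)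

theorem sqfDiv_mono : Monotone (sqfDiv τ) := by
  intro s s' hss'
  refine prod_le_prod' fun j _ => ?_
  have hj := hss' j
  revert hj
  cases s j <;> cases s' j <;> simp [(nthPrime_prime j).one_le]

theorem sum_sqfDiv : ∑ s, sqfDiv τ s = ∏ j : Fin τ, (nthPrime j + 1) := by
  calc ∑ s, sqfDiv τ s = ∏ j : Fin τ, ∑ b : Bool, if b then nthPrime j else 1 := by
        rw [Fintype.prod_sum]; rfl
    _ = ∏ j : Fin τ, (nthPrime j + 1) := by simp

theorem natAbs_mulCoeff_le (c₁ c₂ : (Fin τ → Bool) → ℤ) (t : Fin τ → Bool) :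
    (mulCoeff c₁ c₂ t).natAbs ≤ Mcoef c₁ * Mcoef c₂ * ∏ j : Fin τ, (nthPrime j + 1) :=
  calc (mulCoeff c₁ c₂ t).natAbs
      ≤ ∑ s, (c₁ s).natAbs * (c₂ (s ∆ t)).natAbs * sqfDiv τ (s ⊓ s ∆ t) := by
        refine (Int.natAbs_sum_le _ _).trans_eq (sum_congr rfl fun s _ => ?_)
        rw [Int.natAbs_mul, Int.natAbs_mul, Int.natAbs_natCast]
    _ ≤ ∑ s, Mcoef c₁ * Mcoef c₂ * sqfDiv τ s := by
        gcongr with s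
        · exact natAbs_le_Mcoef c₁ s
        · exact natAbs_le_Mcoef c₂ _
        · exact sqfDiv_mono inf_le_left
    _ = Mcoef c₁ * Mcoef c₂ * ∏ j : Fin τ, (nthPrime j + 1) := by rw [← mul_sum, sum_sqfDiv]

end Multiplication

theorem stmt_8 (τ : ℕ) (c₁ c₂ c₃ : (Fin τ → Bool) → ℤ)
    (h : (∑ s, (c₃ s : ℝ) * Real.sqrt (sqfDiv τ s)) =
      (∑ s, (c₁ s : ℝ) * Real.sqrt (sqfDiv τ s)) * (∑ s, (c₂ s : ℝ) * Real.sqrt (sqfDiv τ s))) :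
    Mcoef c₃ ≤ Mcoef c₁ * Mcoef c₂ * ∏ j : Fin τ, (nthPrime j + 1) := by
  obtain rfl : c₃ = mulCoeff c₁ c₂ := sqrtComb_injective (h.trans (sqrtComb_mul c₁ c₂))
  exact Finset.sup_le fun t _ => natAbs_mulCoeff_le c₁ c₂ t
end

section
/- Fix τ ∈ ℕ. There exists a constant c_τ > 0 such that for every n ∈ ℕ and every nonzero w ∈ ℤ[√p_1, ..., √p_τ] with all coordinates bounded by n in absolute value (i.e. M(w) ≤ n), one has |w| ≥ c_τ · n^{-(2^τ − 1)}. -/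
open Finset
open scoped symmDiff

namespace SqrtSum

variable {τ : ℕ} (q : Fin τ → ℕ)

def selProd (s : Fin τ → Bool) : ℕ := ∏ j, if s j then q j else 1

noncomputable def sqrtSum (c : (Fin τ → Bool) → ℤ) : ℝ := ∑ s, (c s : ℝ) * √(selProd q s)

-- Reindexing the product by `t = s ∆ u` turns `s ⊓ t` into `s \ u`.
def mulCoeff (a b : (Fin τ → Bool) → ℤ) (u : Fin τ → Bool) : ℤ :=
  ∑ s, a s * b (s ∆ u) * selProd q (s \ u)

noncomputable def coeffBound : ℝ := 2 ^ τ * ∏ j, ((q j : ℝ) + 1)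

lemma one_le_coeffBound : 1 ≤ coeffBound q :=
  one_le_mul_of_one_le_of_one_le (one_le_pow₀ one_le_two)
    (one_le_prod fun j => by simp)

lemma selProd_mul_selProd (s t : Fin τ → Bool) :
    selProd q s * selProd q t = selProd q (s ⊓ t) ^ 2 * selProd q (s ∆ t) := by
  simp only [selProd, ← prod_mul_distrib, ← prod_pow]
  refine prod_congr rfl fun j _ => ?_
  rw [Pi.inf_apply, Pi.symmDiff_apply]
  generalize s j = x, t j = y
  cases x <;> cases y <;> simp [sq]

lemma sqrt_selProd_mul_sqrt_selProd (s t : Fin τ → Bool) :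
    √(selProd q s : ℝ) * √(selProd q t : ℝ) = selProd q (s ⊓ t) * √(selProd q (s ∆ t) : ℝ) := by
  rw [← Real.sqrt_mul (by positivity), ← Nat.cast_mul, selProd_mul_selProd, Nat.cast_mul,
    Real.sqrt_mul (by positivity), Nat.cast_pow, Real.sqrt_sq (by positivity)]

lemma selProd_le_prod (s : Fin τ → Bool) : (selProd q s : ℝ) ≤ ∏ j, ((q j : ℝ) + 1) := by
  simp only [selProd, Nat.cast_prod]
  refine prod_le_prod (fun j _ => by positivity) fun j _ => ?_
  split_ifs <;> simp

lemma selProd_snoc (p : ℕ) (s : Fin τ → Bool) (x : Bool) :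
    selProd (Fin.snoc q p : Fin (τ + 1) → ℕ) (Fin.snoc s x) =
      selProd q s * if x then p else 1 := by
  simp [selProd, Fin.prod_univ_castSucc]

lemma sqrtSum_mul (a b : (Fin τ → Bool) → ℤ) :
    sqrtSum q a * sqrtSum q b = sqrtSum q (mulCoeff q a b) := by
  have inf_symmDiff_self_left (s u : Fin τ → Bool) : s ⊓ s ∆ u = s \ u := by
    rw [inf_symmDiff_distrib_left, inf_idem, symmDiff_of_ge inf_le_left, sdiff_inf_self_left]
  calc sqrtSum q a * sqrtSum q b
      = ∑ s, ∑ t, (a s * b t : ℝ) * (selProd q (s ⊓ t) * √(selProd q (s ∆ t) : ℝ)) := by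
        rw [sqrtSum, sqrtSum, sum_mul_sum]
        refine sum_congr rfl fun s _ => sum_congr rfl fun t _ => ?_
        rw [← sqrt_selProd_mul_sqrt_selProd]
        ring
    _ = ∑ s, ∑ u, (a s * b (s ∆ u) : ℝ) * (selProd q (s \ u) * √(selProd q u : ℝ)) := by
        refine sum_congr rfl fun s _ =>
          (Fintype.sum_bijective (s ∆ ·) (symmDiff_right_involutive s).bijective _ _
            fun u => ?_).symm
        rw [inf_symmDiff_self_left, symmDiff_symmDiff_cancel_left]
    _ = sqrtSum q (mulCoeff q a b) := by
        rw [sum_comm, sqrtSum]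
        refine sum_congr rfl fun u _ => ?_
        simp only [mulCoeff, Int.cast_sum, Int.cast_mul, Int.cast_natCast, sum_mul]
        refine sum_congr rfl fun s _ => ?_
        ring

lemma sqrtSum_snoc (p : ℕ) (c : (Fin (τ + 1) → Bool) → ℤ) :
    sqrtSum (Fin.snoc q p : Fin (τ + 1) → ℕ) c =
      sqrtSum q (fun s => c (Fin.snoc s false)) +
        sqrtSum q (fun s => c (Fin.snoc s true)) * √p := by
  rw [sqrtSum, ← (Fin.snocEquiv fun _ => Bool).sum_comp, Fintype.sum_prod_type, Fintype.sum_bool,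
    add_comm, sqrtSum, sqrtSum, sum_mul]
  congr 1 <;> refine sum_congr rfl fun s _ => ?_
  · simp [Fin.snocEquiv, selProd_snoc]
  · simp only [Fin.snocEquiv, Equiv.coe_fn_mk, selProd_snoc, if_true, Nat.cast_mul]
    rw [Real.sqrt_mul (by positivity)]
    ring

lemma sum_const_fin_bool (x : ℝ) : ∑ _s : Fin τ → Bool, x = 2 ^ τ * x := by
  simp

lemma abs_sqrtSum_le {c : (Fin τ → Bool) → ℤ} {n : ℝ} (hc : ∀ s, |(c s : ℝ)| ≤ n) :
    |sqrtSum q c| ≤ coeffBound q * n := by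
  calc |sqrtSum q c| ≤ ∑ s, |(c s : ℝ) * √(selProd q s : ℝ)| := abs_sum_le_sum_abs _ _
    _ ≤ ∑ _s : Fin τ → Bool, n * ∏ j, ((q j : ℝ) + 1) := sum_le_sum fun s _ => ?_
    _ = coeffBound q * n := by rw [sum_const_fin_bool, coeffBound]; ring
  have sqrt_le_self : √(selProd q s : ℝ) ≤ selProd q s :=
    (Real.sqrt_le_left (by positivity)).mpr (by exact_mod_cast Nat.le_self_pow two_ne_zero _)
  rw [abs_mul, abs_of_nonneg (Real.sqrt_nonneg _)]
  exact mul_le_mul (hc s) (sqrt_le_self.trans (selProd_le_prod q s)) (by positivity)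
    ((abs_nonneg _).trans (hc s))

lemma abs_mulCoeff_le {a b : (Fin τ → Bool) → ℤ} {m m' : ℝ} (ha : ∀ s, |(a s : ℝ)| ≤ m)
    (hb : ∀ s, |(b s : ℝ)| ≤ m') (u : Fin τ → Bool) :
    |(mulCoeff q a b u : ℝ)| ≤ coeffBound q * (m * m') := by
  rw [mulCoeff, Int.cast_sum]
  calc |∑ s, ((a s * b (s ∆ u) * selProd q (s \ u) : ℤ) : ℝ)|
        ≤ ∑ s, |((a s * b (s ∆ u) * selProd q (s \ u) : ℤ) : ℝ)| := abs_sum_le_sum_abs _ _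
    _ ≤ ∑ _s : Fin τ → Bool, m * m' * ∏ j, ((q j : ℝ) + 1) := sum_le_sum fun s _ => ?_
    _ = coeffBound q * (m * m') := by rw [sum_const_fin_bool, coeffBound]; ring
  push_cast
  rw [abs_mul, abs_mul, Nat.abs_cast]
  have hm : 0 ≤ m := (abs_nonneg _).trans (ha s)
  have hm' : 0 ≤ m' := (abs_nonneg _).trans (hb s)
  exact mul_le_mul (mul_le_mul (ha s) (hb _) (abs_nonneg _) hm) (selProd_le_prod q _)
    (by positivity) (by positivity)

lemma sqrtSum_mul_conj (p : ℕ) (a b : (Fin τ → Bool) → ℤ) :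
    (sqrtSum q a + sqrtSum q b * √p) * (sqrtSum q a - sqrtSum q b * √p) =
      sqrtSum q (fun u => mulCoeff q a a u - p * mulCoeff q b b u) := by
  have hp : √(p : ℝ) ^ 2 = p := Real.sq_sqrt (Nat.cast_nonneg p)
  have : sqrtSum q (fun u => mulCoeff q a a u - p * mulCoeff q b b u) =
      sqrtSum q (mulCoeff q a a) - p * sqrtSum q (mulCoeff q b b) := by
    simp only [sqrtSum, Int.cast_sub, Int.cast_mul, Int.cast_natCast, sub_mul, sum_sub_distrib,
      mul_sum, mul_assoc]
  rw [this, ← sqrtSum_mul, ← sqrtSum_mul]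
  linear_combination (-(sqrtSum q b) ^ 2) * hp

def LowerBound (C : ℝ) : Prop :=
  ∀ n : ℝ, 1 ≤ n → ∀ c : (Fin τ → Bool) → ℤ, (∀ s, |(c s : ℝ)| ≤ n) → sqrtSum q c ≠ 0 →
    C ≤ n ^ (2 ^ τ - 1) * |sqrtSum q c|

variable {q}

lemma two_pow_succ_sub_one (τ : ℕ) : 2 ^ (τ + 1) - 1 = 2 * (2 ^ τ - 1) + 1 := by
  have := Nat.one_le_two_pow (n := τ)
  rw [pow_succ]
  omega

lemma LowerBound.le_of_conj_eq_zero {C : ℝ} (hC : LowerBound q C) {p : ℕ} {n : ℝ} (hn : 1 ≤ n)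
    {a b : (Fin τ → Bool) → ℤ} (hb : ∀ s, |(b s : ℝ)| ≤ n)
    (hw : sqrtSum q a + sqrtSum q b * √p ≠ 0) (hconj : sqrtSum q a - sqrtSum q b * √p = 0) :
    C ≤ n ^ (2 ^ (τ + 1) - 1) * |sqrtSum q a + sqrtSum q b * √p| := by
  have hw_eq : sqrtSum q a + sqrtSum q b * √p = 2 * √p * sqrtSum q b := by linear_combination hconj
  rw [hw_eq] at hw ⊢
  have hb0 : sqrtSum q b ≠ 0 := right_ne_zero_of_mul hw
  have hp : 1 ≤ √(p : ℝ) := by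
    have : p ≠ 0 := by rintro rfl; simp at hw
    exact Real.one_le_sqrt.mpr (by exact_mod_cast Nat.one_le_iff_ne_zero.mpr this)
  calc C ≤ n ^ (2 ^ τ - 1) * |sqrtSum q b| := hC n hn b hb hb0
    _ ≤ n ^ (2 ^ (τ + 1) - 1) * (2 * √p * |sqrtSum q b|) := by
        gcongr
        · norm_num
        · omega
        · nlinarith [abs_nonneg (sqrtSum q b)]
    _ = n ^ (2 ^ (τ + 1) - 1) * |2 * √p * sqrtSum q b| := by
        rw [abs_mul, abs_of_nonneg (by positivity : (0 : ℝ) ≤ 2 * √p)]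

lemma LowerBound.le_of_conj_ne_zero {C : ℝ} (hC : LowerBound q C) {p : ℕ} {n : ℝ} (hn : 1 ≤ n)
    {a b : (Fin τ → Bool) → ℤ} (ha : ∀ s, |(a s : ℝ)| ≤ n) (hb : ∀ s, |(b s : ℝ)| ≤ n)
    (hw : sqrtSum q a + sqrtSum q b * √p ≠ 0) (hconj : sqrtSum q a - sqrtSum q b * √p ≠ 0) :
    C ≤ ((1 + p) * coeffBound q) ^ (2 ^ τ - 1) * (coeffBound q * (1 + √p)) *
      (n ^ (2 ^ (τ + 1) - 1) * |sqrtSum q a + sqrtSum q b * √p|) := by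
  set M := coeffBound q
  have hM : 1 ≤ M := one_le_coeffBound q
  set N := (1 + p) * M * n ^ 2
  have hN : 1 ≤ N :=
    one_le_mul_of_one_le_of_one_le (one_le_mul_of_one_le_of_one_le (by simp) hM) (one_le_pow₀ hn)
  have hd : ∀ u, |((mulCoeff q a a u - p * mulCoeff q b b u : ℤ) : ℝ)| ≤ N := fun u => by
    have haa := abs_mulCoeff_le q ha ha u
    have hbb := abs_mulCoeff_le q hb hb u
    push_cast
    calc _ ≤ |(mulCoeff q a a u : ℝ)| + p * |(mulCoeff q b b u : ℝ)| := by
          simpa [abs_mul] using abs_sub (mulCoeff q a a u : ℝ) (p * mulCoeff q b b u)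
      _ ≤ M * (n * n) + p * (M * (n * n)) :=
          add_le_add haa (mul_le_mul_of_nonneg_left hbb (Nat.cast_nonneg p))
      _ = N := by ring
  have hconj_le : |sqrtSum q a - sqrtSum q b * √p| ≤ M * (1 + √p) * n := by
    calc _ ≤ |sqrtSum q a| + |sqrtSum q b| * √p := by
          simpa [abs_mul, abs_of_nonneg (Real.sqrt_nonneg _)] using
            abs_sub (sqrtSum q a) (sqrtSum q b * √p)
      _ ≤ M * n + M * n * √p := by gcongr <;> exact abs_sqrtSum_le q ‹_›
      _ = M * (1 + √p) * n := by ring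
  have hnorm := hC N hN _ hd (by rw [← sqrtSum_mul_conj]; exact mul_ne_zero hw hconj)
  rw [← sqrtSum_mul_conj, abs_mul] at hnorm
  calc C ≤ N ^ (2 ^ τ - 1) * (|sqrtSum q a + sqrtSum q b * √p| *
        |sqrtSum q a - sqrtSum q b * √p|) := hnorm
    _ ≤ N ^ (2 ^ τ - 1) * (|sqrtSum q a + sqrtSum q b * √p| * (M * (1 + √p) * n)) := by gcongr
    _ = _ := by simp only [N]; rw [mul_pow, ← pow_mul, two_pow_succ_sub_one]; ring

theorem LowerBound.snoc {C : ℝ} (hC : LowerBound q C) (hC0 : 0 < C) (p : ℕ) :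
    ∃ C' > 0, LowerBound (Fin.snoc q p : Fin (τ + 1) → ℕ) C' := by
  set K := ((1 + p) * coeffBound q) ^ (2 ^ τ - 1) * (coeffBound q * (1 + √p))
  have hM := one_le_coeffBound q
  have hK : 1 ≤ K :=
    one_le_mul_of_one_le_of_one_le (one_le_pow₀ (one_le_mul_of_one_le_of_one_le (by simp) hM))
      (one_le_mul_of_one_le_of_one_le hM (by simp))
  refine ⟨C / K, by positivity, fun n hn c hc hw => ?_⟩
  rw [sqrtSum_snoc] at hw ⊢
  rw [div_le_iff₀ (by positivity)]
  by_cases hconj : sqrtSum q (fun s => c (Fin.snoc s false)) -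
      sqrtSum q (fun s => c (Fin.snoc s true)) * √p = 0
  · exact (hC.le_of_conj_eq_zero hn (fun _ => hc _) hw hconj).trans
      (le_mul_of_one_le_right (by positivity) hK)
  · rw [mul_comm]
    exact hC.le_of_conj_ne_zero hn (fun _ => hc _) (fun _ => hc _) hw hconj

lemma sqrtSum_fin_zero (q : Fin 0 → ℕ) (c : (Fin 0 → Bool) → ℤ) : sqrtSum q c = c default := by
  rw [sqrtSum, Fintype.sum_subsingleton _ default, selProd, univ_eq_empty, prod_empty,
    Nat.cast_one, Real.sqrt_one, mul_one]

lemma lowerBound_fin_zero (q : Fin 0 → ℕ) : LowerBound q 1 := fun n _ c _ hc => by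
  rw [sqrtSum_fin_zero] at hc ⊢
  simp only [pow_zero, Nat.sub_self, one_mul]
  exact_mod_cast Int.one_le_abs (by exact_mod_cast hc)

theorem exists_lowerBound : ∀ {τ : ℕ} (q : Fin τ → ℕ), ∃ C > 0, LowerBound q C
  | 0, q => ⟨1, one_pos, lowerBound_fin_zero q⟩
  | _ + 1, q => by
    obtain ⟨C, hC0, hC⟩ := exists_lowerBound (Fin.init q)
    rw [← Fin.snoc_init_self q]
    exact hC.snoc hC0 _

lemma sqrtSum_nthPrime (c : (Fin τ → Bool) → ℤ) :
    sqrtSum (fun j => nthPrime j) c = ∑ s, (c s : ℝ) * √(sqfDiv τ s) :=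
  rfl

end SqrtSum

open SqrtSum in
theorem stmt_11 (τ : ℕ) :
    ∃ cτ : ℝ, 0 < cτ ∧ ∀ n : ℕ, 1 ≤ n → ∀ c : (Fin τ → Bool) → ℤ,
      (∀ s, |c s| ≤ (n : ℤ)) →
      (∑ s, (c s : ℝ) * Real.sqrt (sqfDiv τ s)) ≠ 0 →
      cτ * (n : ℝ) ^ (-(2 ^ τ - 1 : ℤ)) ≤ |∑ s, (c s : ℝ) * Real.sqrt (sqfDiv τ s)| := by
  obtain ⟨C, hC0, hC⟩ := exists_lowerBound fun j : Fin τ => nthPrime j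
  refine ⟨C, hC0, fun n hn c hc hw => ?_⟩
  rw [← sqrtSum_nthPrime] at hw ⊢
  have hexp : ((2 ^ τ - 1 : ℕ) : ℤ) = 2 ^ τ - 1 := by simp [Nat.one_le_two_pow]
  rw [← hexp, zpow_neg, zpow_natCast, mul_inv_le_iff₀ (by positivity), mul_comm]
  exact hC n (by exact_mod_cast hn) c (fun s => by exact_mod_cast hc s) hw
end
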